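/- arXiv:2306.12383 — 2 statements merged into one kernel-verified Lean document; each statement's English description precedes it below -/
import Mathlib

section
/- For all real numbers t and c with c > 0 and t ≤ c, one has e^t − 1 − t ≤ t² · (e^c − 1 − c) / c². -/
/-!
For `0 ≤ t ≤ c`, compare the series `e^x - 1 - x = ∑ x^(n+2)/(n+2)!` for `x = t` and `x = c`
termwise, using `c² t^(n+2) ≤ t² c^(n+2)`. For `t ≤ 0`, instead
`e^t - 1 - t ≤ t²/2 ≤ t² (e^c - 1 - c) / c²`.
-/

open Real

theorem Real.hasSum_exp_sub_one_sub (x : ℝ) :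
    HasSum (fun n : ℕ => x ^ (n + 2) / (n + 2).factorial) (exp x - 1 - x) := by
  have h := (hasSum_nat_add_iff' 2).mpr (NormedSpace.expSeries_div_hasSum_exp x)
  simpa [← exp_eq_exp_ℝ, Finset.sum_range_succ, sub_sub] using h

theorem Real.sq_mul_exp_sub_one_sub_le_of_nonneg {t c : ℝ} (ht : 0 ≤ t) (htc : t ≤ c) :
    c ^ 2 * (exp t - 1 - t) ≤ t ^ 2 * (exp c - 1 - c) := by
  refine hasSum_le (fun n => ?_) ((hasSum_exp_sub_one_sub t).mul_left _)
    ((hasSum_exp_sub_one_sub c).mul_left _)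
  have hpow : t ^ n ≤ c ^ n := by gcongr
  calc c ^ 2 * (t ^ (n + 2) / (n + 2).factorial)
      = c ^ 2 * t ^ 2 * t ^ n / (n + 2).factorial := by ring
    _ ≤ c ^ 2 * t ^ 2 * c ^ n / (n + 2).factorial := by gcongr
    _ = t ^ 2 * (c ^ (n + 2) / (n + 2).factorial) := by ring

theorem Real.exp_le_one_add_add_sq_div_two_of_nonpos {x : ℝ} (hx : x ≤ 0) :
    exp x ≤ 1 + x + x ^ 2 / 2 := by
  have hneg : 1 - x + x ^ 2 / 2 - x ^ 3 / 6 ≤ exp (-x) := by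
    have h := sum_le_exp_of_nonneg (neg_nonneg.2 hx) 4
    norm_num [Finset.sum_range_succ, Nat.factorial] at h
    linarith
  -- `(1 - x + x²/2 - x³/6) (1 + x + x²/2) = 1 - x³/6 (1 - x/2 + x²/2) ≥ 1` for `x ≤ 0`
  have hprod := exp_add x (-x)
  rw [add_neg_cancel, exp_zero] at hprod
  nlinarith [exp_pos x, mul_le_mul_of_nonneg_left hneg (exp_pos x).le,
    mul_nonneg (neg_nonneg.2 hx) (sq_nonneg x), sq_nonneg (x + 1)]

theorem Real.sq_mul_exp_sub_one_sub_le {t c : ℝ} (hc : 0 ≤ c) (htc : t ≤ c) :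
    c ^ 2 * (exp t - 1 - t) ≤ t ^ 2 * (exp c - 1 - c) := by
  rcases le_total 0 t with ht | ht
  · exact sq_mul_exp_sub_one_sub_le_of_nonneg ht htc
  · have hc' : c ^ 2 / 2 ≤ exp c - 1 - c := by linarith [quadratic_le_exp_of_nonneg hc]
    have ht' : exp t - 1 - t ≤ t ^ 2 / 2 := by
      linarith [exp_le_one_add_add_sq_div_two_of_nonpos ht]
    calc c ^ 2 * (exp t - 1 - t) ≤ c ^ 2 * (t ^ 2 / 2) := by gcongr
      _ = t ^ 2 * (c ^ 2 / 2) := by ring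
      _ ≤ t ^ 2 * (exp c - 1 - c) := by gcongr

/-- Bennett-type elementary bound. For all real `t` and `c` with `c > 0` and
`t ≤ c`, one has `e^t - 1 - t ≤ t² (e^c - 1 - c) / c²`. -/
theorem bennett_type_bound (t c : ℝ) (hc : 0 < c) (htc : t ≤ c) :
    exp t - 1 - t ≤ t ^ 2 * (exp c - 1 - c) / c ^ 2 := by
  rw [le_div_iff₀ (by positivity), mul_comm]
  exact sq_mul_exp_sub_one_sub_le hc.le htc
end

section
/- Let X₁, …, Xₙ be independent real-valued integrable random variables with finite variances on a probability space, let m > 0 satisfy m > |E[Xₖ]| for every k, and let Zₖ = max(min(Xₖ, m), −m) be the truncation of Xₖ to [−m, m]. Let b ≥ 0 and let Y₁, …, Yₙ be real-valued random variables on the same space such that |Yₖ − Zₖ| ≤ b almost surely for every k. Then for every z > 0, P[|Σₖ Yₖ − Σₖ E[Xₖ]| ≥ z] ≤ 2 · exp( Σₖ Var[Xₖ] / (m(m − |E[Xₖ]|)) − (z − b·n)/m ). -/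
open MeasureTheory ProbabilityTheory Real

/-!
Chernoff's method with parameter `1 / m`. For `Z = max (min X m) (-m)` and `a = E[X]` we have
`(Z - a) / m ≤ (m - a) / m < 2`, and `exp w ≤ 1 + w + w² / (2 - c)` for `w ≤ c < 2` gives
`exp ((Z - a) / m) ≤ 1 + (X - a) / m + (X - a)² / (m (m - |a|))`: on `[-m, m]` this only enlarges
the denominator `m + a` to `m - |a|`, and outside it the truncation lowers the left side while the
right side grows. Taking expectations, `E[exp (Z / m)] ≤ exp (a / m + Var[X] / (m (m - |a|)))`, and
the same for `-Z` since truncation commutes with negation. Independence multiplies these bounds over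
`k`, the Chernoff bound controls both tails of `Σ Z`, and `|Σ Y - Σ Z| ≤ b n` shifts `z` by `b n`.
-/

namespace Real

theorem exp_le_one_add_add_sq_div_two_of_nonpos_s9 {x : ℝ} (hx : x ≤ 0) :
    exp x ≤ 1 + x + x ^ 2 / 2 := by
  have h_neg : 1 - x + x ^ 2 / 2 ≤ exp (-x) := by
    simpa [sub_eq_add_neg] using quadratic_le_exp_of_nonneg (neg_nonneg.2 hx)
  have h_mul : exp x * exp (-x) = 1 := by rw [← exp_add, add_neg_cancel, exp_zero]
  nlinarith [exp_pos x, sq_nonneg (x ^ 2)]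

theorem exp_le_one_add_add_sq_div_two_sub {x c : ℝ} (hc₀ : 0 ≤ c) (hc₂ : c < 2) (hx : x ≤ c) :
    exp x ≤ 1 + x + x ^ 2 / (2 - c) := by
  rcases le_or_gt x 0 with hx₀ | hx₀
  · calc exp x ≤ 1 + x + x ^ 2 / 2 := exp_le_one_add_add_sq_div_two_of_nonpos_s9 hx₀
      _ ≤ 1 + x + x ^ 2 / (2 - c) := by gcongr; linarith
  · calc exp x ≤ (2 + x) / (2 - x) := exp_le_two_add_div_two_sub hx₀.le (by linarith)
      _ = 1 + x + x ^ 2 / (2 - x) := by field_simp [(by linarith : 2 - x ≠ 0)]; ring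
      _ ≤ 1 + x + x ^ 2 / (2 - c) := by gcongr

end Real

theorem max_min_neg {x m : ℝ} (hm : 0 ≤ m) :
    max (min (-x) m) (-m) = -max (min x m) (-m) := by
  grind

theorem abs_max_min_le {x m : ℝ} (hm : 0 ≤ m) : |max (min x m) (-m)| ≤ m :=
  abs_le.2 ⟨le_max_right _ _, max_le (min_le_right _ _) (by linarith)⟩

theorem measurable_max_min (m : ℝ) : Measurable fun x : ℝ => max (min x m) (-m) := by
  fun_prop

theorem sub_add_sq_div_max_min_le {x a m : ℝ} (ham : |a| < m) :
    max (min x m) (-m) - a + (max (min x m) (-m) - a) ^ 2 / (m + a) ≤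
      x - a + (x - a) ^ 2 / (m - |a|) := by
  obtain ⟨ha₁, ha₂⟩ := abs_lt.1 ham
  have h_abs : m - |a| ≤ m + a := by linarith [neg_abs_le a]
  have h_pos : 0 < m - |a| := by linarith
  rcases le_total x (-m) with hx | hx
  · have h_lhs : -m - a + (-m - a) ^ 2 / (m + a) = 0 := by
      field_simp [(by linarith : m + a ≠ 0)]; ring
    rw [min_eq_left (by linarith), max_eq_right hx, h_lhs]
    calc (0 : ℝ) ≤ (a - x) * ((a - x) / (m - |a|) - 1) :=
          mul_nonneg (by linarith) (sub_nonneg.2 ((one_le_div h_pos).2 (by linarith)))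
      _ = x - a + (x - a) ^ 2 / (m - |a|) := by ring
  rcases le_total x m with hx' | hx'
  · rw [min_eq_left hx', max_eq_left hx]
    gcongr
  · rw [min_eq_right hx', max_eq_left (by linarith)]
    gcongr ?_ + ?_
    · linarith
    · exact div_le_div₀ (sq_nonneg _) (by gcongr) h_pos h_abs

theorem exp_max_min_sub_div_le {x a m : ℝ} (ham : |a| < m) :
    exp ((max (min x m) (-m) - a) / m) ≤ 1 + (x - a) / m + (x - a) ^ 2 / (m * (m - |a|)) := by
  obtain ⟨ha₁, ha₂⟩ := abs_lt.1 ham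
  have hm : 0 < m := (abs_nonneg a).trans_lt ham
  set y := max (min x m) (-m)
  have hy : y ≤ m := max_le (min_le_right _ _) (by linarith)
  calc exp ((y - a) / m) ≤ 1 + (y - a) / m + ((y - a) / m) ^ 2 / (2 - (m - a) / m) :=
        exp_le_one_add_add_sq_div_two_sub (by bound) ((div_lt_iff₀ hm).2 (by linarith))
          (by gcongr)
    _ = 1 + (y - a + (y - a) ^ 2 / (m + a)) / m := by
        have h_two_sub : 2 - (m - a) / m = (m + a) / m := by field_simp; ring
        rw [h_two_sub]
        field_simp [(by linarith : m + a ≠ 0)]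
        ring
    _ ≤ 1 + (x - a + (x - a) ^ 2 / (m - |a|)) / m := by
        gcongr 1 + ?_ / m; exact sub_add_sq_div_max_min_le ham
    _ = 1 + (x - a) / m + (x - a) ^ 2 / (m * (m - |a|)) := by
        rw [add_div, div_div, mul_comm (m - |a|), add_assoc]

namespace ProbabilityTheory

variable {Ω : Type*} {mΩ : MeasurableSpace Ω} {μ : Measure Ω}

theorem mgf_max_min_le [IsProbabilityMeasure μ] {X : Ω → ℝ} {m : ℝ} (hX : MemLp X 2 μ)
    (hXm : |μ[X]| < m) :
    mgf (fun ω => max (min (X ω) m) (-m)) μ m⁻¹ ≤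
      exp (m⁻¹ * μ[X] + Var[X; μ] / (m * (m - |μ[X]|))) := by
  set a := μ[X]
  set K := m * (m - |a|)
  have hm : 0 < m := (abs_nonneg a).trans_lt hXm
  have h_centered : Integrable (fun ω => X ω - a) μ :=
    (hX.integrable one_le_two).sub (integrable_const a)
  have h_sq : Integrable (fun ω => (X ω - a) ^ 2) μ := (hX.sub (memLp_const a)).integrable_sq
  have h_mean : ∫ ω, (X ω - a) ∂μ = 0 := by
    rw [integral_sub (hX.integrable one_le_two) (integrable_const a)]; simp [a]
  have h_var : ∫ ω, (X ω - a) ^ 2 ∂μ = Var[X; μ] :=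
    (variance_eq_integral hX.aestronglyMeasurable.aemeasurable).symm
  have h_linear : Integrable (fun ω => 1 + (X ω - a) / m) μ :=
    (integrable_const 1).add (h_centered.div_const m)
  have h_exp : ∫ ω, exp ((max (min (X ω) m) (-m) - a) / m) ∂μ ≤ 1 + Var[X; μ] / K :=
    calc ∫ ω, exp ((max (min (X ω) m) (-m) - a) / m) ∂μ
        ≤ ∫ ω, (1 + (X ω - a) / m + (X ω - a) ^ 2 / K) ∂μ :=
          integral_mono_of_nonneg (ae_of_all _ fun _ => (exp_pos _).le)
            (h_linear.add (h_sq.div_const K)) (ae_of_all _ fun _ => exp_max_min_sub_div_le hXm)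
      _ = 1 + Var[X; μ] / K := by
          rw [integral_add h_linear (h_sq.div_const K),
            integral_add (integrable_const 1) (h_centered.div_const m), integral_div, integral_div,
            h_mean, h_var]
          simp
  calc mgf (fun ω => max (min (X ω) m) (-m)) μ m⁻¹
      = exp (m⁻¹ * a) * ∫ ω, exp ((max (min (X ω) m) (-m) - a) / m) ∂μ := by
        rw [mgf, ← integral_const_mul]
        congr with ω
        rw [← exp_add, div_eq_inv_mul, mul_sub, add_sub_cancel]
    _ ≤ exp (m⁻¹ * a) * exp (Var[X; μ] / K) := by
        gcongr
        linarith [add_one_le_exp (Var[X; μ] / K)]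
    _ = exp (m⁻¹ * a + Var[X; μ] / K) := (exp_add _ _).symm

theorem mgf_max_min_neg_le [IsProbabilityMeasure μ] {X : Ω → ℝ} {m : ℝ} (hX : MemLp X 2 μ)
    (hXm : |μ[X]| < m) :
    mgf (fun ω => max (min (X ω) m) (-m)) μ (-m⁻¹) ≤
      exp (-m⁻¹ * μ[X] + Var[X; μ] / (m * (m - |μ[X]|))) := by
  have hm : 0 ≤ m := (abs_nonneg _).trans hXm.le
  have h_neg := mgf_max_min_le (X := -X) hX.neg (by rwa [integral_neg', abs_neg])
  simp only [Pi.neg_apply, max_min_neg hm, integral_neg, abs_neg, variance_neg] at h_neg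
  calc mgf (fun ω => max (min (X ω) m) (-m)) μ (-m⁻¹)
      = mgf (fun ω => -max (min (X ω) m) (-m)) μ m⁻¹ := by rw [← mgf_neg]; rfl
    _ ≤ _ := h_neg
    _ = _ := by ring_nf

theorem iIndepFun.mgf_sum_le_exp_sum {ι : Type*} {X : ι → Ω → ℝ} (h_indep : iIndepFun X μ)
    (h_meas : ∀ i, AEMeasurable (X i) μ) (s : Finset ι) {t : ℝ} {c : ι → ℝ}
    (h : ∀ i ∈ s, mgf (X i) μ t ≤ exp (c i)) :
    mgf (fun ω => ∑ i ∈ s, X i ω) μ t ≤ exp (∑ i ∈ s, c i) := by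
  rw [← Finset.sum_fn, h_indep.mgf_sum₀ h_meas, exp_sum]
  exact Finset.prod_le_prod (fun _ _ => mgf_nonneg) h

theorem measure_abs_sub_ge_le_of_mgf_le [IsFiniteMeasure μ] {S : Ω → ℝ} {t a v s : ℝ}
    (ht : 0 ≤ t) (h_int : Integrable (fun ω => exp (t * S ω)) μ)
    (h_int_neg : Integrable (fun ω => exp (-t * S ω)) μ)
    (h_mgf : mgf S μ t ≤ exp (t * a + v)) (h_mgf_neg : mgf S μ (-t) ≤ exp (-t * a + v)) :
    μ {ω | s ≤ |S ω - a|} ≤ ENNReal.ofReal (2 * exp (v - t * s)) := by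
  have h_upper : μ.real {ω | a + s ≤ S ω} ≤ exp (v - t * s) :=
    calc μ.real {ω | a + s ≤ S ω} ≤ exp (-t * (a + s)) * mgf S μ t :=
          measure_ge_le_exp_mul_mgf _ ht h_int
      _ ≤ exp (-t * (a + s)) * exp (t * a + v) := by gcongr
      _ = exp (v - t * s) := by rw [← exp_add]; ring_nf
  have h_lower : μ.real {ω | S ω ≤ a - s} ≤ exp (v - t * s) :=
    calc μ.real {ω | S ω ≤ a - s} ≤ exp (- -t * (a - s)) * mgf S μ (-t) :=
          measure_le_le_exp_mul_mgf _ (neg_nonpos.2 ht) h_int_neg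
      _ ≤ exp (- -t * (a - s)) * exp (-t * a + v) := by gcongr
      _ = exp (v - t * s) := by rw [← exp_add]; ring_nf
  calc μ {ω | s ≤ |S ω - a|} ≤ μ ({ω | a + s ≤ S ω} ∪ {ω | S ω ≤ a - s}) := by
        refine measure_mono fun ω hω => ?_
        rcases le_abs'.1 (show s ≤ |S ω - a| from hω) with h | h
        · exact Or.inr (by simp only [Set.mem_ofPred_eq]; linarith)
        · exact Or.inl (by simp only [Set.mem_ofPred_eq]; linarith)
    _ ≤ μ {ω | a + s ≤ S ω} + μ {ω | S ω ≤ a - s} := measure_union_le _ _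
    _ ≤ ENNReal.ofReal (exp (v - t * s)) + ENNReal.ofReal (exp (v - t * s)) := by
        rw [← ofReal_measureReal, ← ofReal_measureReal]
        gcongr
    _ = ENNReal.ofReal (2 * exp (v - t * s)) := by
        rw [← ENNReal.ofReal_add (exp_pos _).le (exp_pos _).le, two_mul]

theorem measure_abs_sub_ge_le_of_ae_abs_sub_le {Y S : Ω → ℝ} {a c z : ℝ}
    (h : ∀ᵐ ω ∂μ, |Y ω - S ω| ≤ c) :
    μ {ω | z ≤ |Y ω - a|} ≤ μ {ω | z - c ≤ |S ω - a|} := by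
  refine measure_mono_ae ?_
  filter_upwards [h] with ω hω hz
  have := abs_sub_le (Y ω) (S ω) a
  change z ≤ |Y ω - a| at hz
  change z - c ≤ |S ω - a|
  linarith

end ProbabilityTheory

theorem truncation_concentration_perturbed_general {Ω : Type*} [MeasureSpace Ω]
    [IsProbabilityMeasure (ℙ : Measure Ω)] (n : ℕ) (X : Fin n → Ω → ℝ)
    (hXind : iIndepFun X ℙ)
    (hX2 : ∀ k, MemLp (X k) 2 ℙ)
    (m : ℝ) (hm : 0 < m) (hmE : ∀ k, |∫ ω, X k ω| < m)
    (Z : Fin n → Ω → ℝ) (hZ : ∀ k ω, Z k ω = max (min (X k ω) m) (-m))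
    (b : ℝ) (Y : Fin n → Ω → ℝ)
    (hY : ∀ k, ∀ᵐ ω ∂ℙ, |Y k ω - Z k ω| ≤ b)
    (z : ℝ) :
    ℙ {ω | z ≤ |(∑ k, Y k ω) - ∑ k, ∫ ω', X k ω'|} ≤
      ENNReal.ofReal
        (2 * exp ((∑ k, variance (X k) ℙ / (m * (m - |∫ ω, X k ω|))) - (z - b * n) / m)) := by
  obtain rfl : Z = fun k ω => max (min (X k ω) m) (-m) := funext fun k => funext (hZ k)
  have h_meas : ∀ k, AEMeasurable (fun ω => max (min (X k ω) m) (-m)) :=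
    fun k => (measurable_max_min m).comp_aemeasurable (hX2 k).aestronglyMeasurable.aemeasurable
  have h_indep : iIndepFun (fun k ω => max (min (X k ω) m) (-m)) :=
    hXind.comp _ fun _ => measurable_max_min m
  have h_bdd : ∀ ω, |∑ k, max (min (X k ω) m) (-m)| ≤ n * m := fun ω =>
    (Finset.abs_sum_le_sum_abs _ _).trans <|
      (Finset.sum_le_sum fun k _ => abs_max_min_le hm.le).trans_eq (by simp)
  have h_perturb : ∀ᵐ ω, |∑ k, Y k ω - ∑ k, max (min (X k ω) m) (-m)| ≤ b * n := by
    filter_upwards [ae_all_iff.2 hY] with ω hω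
    rw [← Finset.sum_sub_distrib]
    calc |∑ k, (Y k ω - max (min (X k ω) m) (-m))|
        ≤ ∑ k, |Y k ω - max (min (X k ω) m) (-m)| := Finset.abs_sum_le_sum_abs _ _
      _ ≤ ∑ _k : Fin n, b := Finset.sum_le_sum fun k _ => hω k
      _ = b * n := by simp [mul_comm]
  refine (measure_abs_sub_ge_le_of_ae_abs_sub_le h_perturb).trans ?_
  rw [div_eq_inv_mul]
  refine measure_abs_sub_ge_le_of_mgf_le (inv_nonneg.2 hm.le)
    (integrable_exp_mul_of_mem_Icc (by fun_prop) (ae_of_all _ fun ω => abs_le.1 (h_bdd ω)))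
    (integrable_exp_mul_of_mem_Icc (by fun_prop) (ae_of_all _ fun ω => abs_le.1 (h_bdd ω))) ?_ ?_
  · refine (h_indep.mgf_sum_le_exp_sum h_meas _
      fun k _ => mgf_max_min_le (hX2 k) (hmE k)).trans_eq ?_
    rw [Finset.sum_add_distrib, Finset.mul_sum]
  · refine (h_indep.mgf_sum_le_exp_sum h_meas _
      fun k _ => mgf_max_min_neg_le (hX2 k) (hmE k)).trans_eq ?_
    rw [Finset.sum_add_distrib, Finset.mul_sum]

/-- concentration for perturbed truncated sums. With `X k`, `Z k`, `m` as in
the truncation concentration bound, if `|Y k - Z k| ≤ b` almost surely for each `k`, then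
for every `z > 0`,
`P[|Σ Y k - Σ E[X k]| ≥ z] ≤ 2 exp(Σ Var[X k]/(m(m - |E[X k]|)) - (z - b n)/m)`. -/
theorem truncation_concentration_perturbed {Ω : Type*} [MeasureSpace Ω]
    [IsProbabilityMeasure (ℙ : Measure Ω)] (n : ℕ) (X : Fin n → Ω → ℝ)
    (hXind : iIndepFun X ℙ)
    (hXint : ∀ k, Integrable (X k)) (hX2 : ∀ k, MemLp (X k) 2 ℙ)
    (m : ℝ) (hm : 0 < m) (hmE : ∀ k, |∫ ω, X k ω| < m)
    (Z : Fin n → Ω → ℝ) (hZ : ∀ k ω, Z k ω = max (min (X k ω) m) (-m))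
    (b : ℝ) (hb : 0 ≤ b) (Y : Fin n → Ω → ℝ)
    (hY : ∀ k, ∀ᵐ ω ∂ℙ, |Y k ω - Z k ω| ≤ b)
    (z : ℝ) (hz : 0 < z) :
    ℙ {ω | z ≤ |(∑ k, Y k ω) - ∑ k, ∫ ω', X k ω'|} ≤
      ENNReal.ofReal
        (2 * exp ((∑ k, variance (X k) ℙ / (m * (m - |∫ ω, X k ω|))) - (z - b * n) / m)) :=
  truncation_concentration_perturbed_general n X hXind hX2 m hm hmE Z hZ b Y hY z
end
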